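/- (Connection with the classical divergence.) Let (x*, y*) be an interior Nash equilibrium with value u*, and suppose the reactive strategy X has all columns equal to a single mixed strategy x ∈ Δ^{m_X−1} with positive entries, i.e. x_{i|j} = x_i for all j. Then for any y ∈ Δ^{m_Y−1}, (y − y*)ᵀ Xᵀ U (y − y*) = 0; consequently, along the replicator dynamics the instantaneous time derivative of the conditional-sum divergence D(X, y) at such a point is 0, matching the conservation of the classical divergence D_c(x,y) = D_KL(x* ‖ x) + D_KL(y* ‖ y) in the memoryless game. -/

import Mathlib

/-!
Along the replicator dynamics each Kullback–Leibler term `∑ c log (c / p)` with `ṗ = p (g - ⟨p, g⟩)`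
changes at rate `⟨p - c, g⟩`. Summing over the columns of `X` and over `y`, and using the equilibrium
conditions `x*ᵀ U = u* 1ᵀ`, `U y* = u* 1` together with the column sums of `X`, the rate of the
conditional-sum divergence collapses to `-(y - y*)ᵀ Xᵀ U (y - y*)`. When all columns of `X` equal `x`,
`X (y - y*) = x · ∑ (y - y*) = 0`, so this quadratic form, and with it the rate, vanishes.
-/

open Finset Real Matrix

variable {ι κ : Type*}

lemma hasDerivAt_mul_log_div {p : ℝ → ℝ} {p' t : ℝ} (c : ℝ) (hp : HasDerivAt p p' t)
    (ht : p t ≠ 0) : HasDerivAt (fun s => c * log (c / p s)) (-(c * (p' / p t))) t := by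
  have hlog : HasDerivAt (fun s => c * (log c - log (p s))) (c * (0 - p' / p t)) t :=
    ((hasDerivAt_const t (log c)).sub (hp.log ht)).const_mul c
  refine (hlog.congr_of_eventuallyEq ?_).congr_deriv (by ring)
  filter_upwards [hp.continuousAt.eventually_ne ht] with s hs
  rcases eq_or_ne c 0 with rfl | hc
  · simp
  · rw [log_div hc hs]

lemma hasDerivAt_sum_mul_log_div_of_replicator [Fintype ι] {p : ℝ → ι → ℝ} {g : ι → ℝ} {t : ℝ}
    (c : ι → ℝ) (hc : ∑ k, c k = 1)
    (hp : ∀ k, HasDerivAt (fun s => p s k) (p t k * (g k - ∑ l, p t l * g l)) t)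
    (ht : ∀ k, p t k ≠ 0) :
    HasDerivAt (fun s => ∑ k, c k * log (c k / p s k)) (∑ k, (p t k - c k) * g k) t := by
  have hterm (k : ι) : HasDerivAt (fun s => c k * log (c k / p s k))
      (-(c k * (g k - ∑ l, p t l * g l))) t := by
    simpa only [mul_div_cancel_left₀ _ (ht k)] using hasDerivAt_mul_log_div (c k) (hp k) (ht k)
  refine (HasDerivAt.fun_sum fun k _ => hterm k).congr_deriv ?_
  simp only [sum_neg_distrib, mul_sub, sub_mul, sum_sub_distrib, ← sum_mul, hc]
  ring

variable [Fintype κ]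

lemma mulVec_eq_zero_of_columns_eq {X : Matrix ι κ ℝ} {x : ι → ℝ} (hX : ∀ i j, X i j = x i)
    {v : κ → ℝ} (hv : ∑ j, v j = 0) : X *ᵥ v = 0 := by
  ext i
  simp only [mulVec, dotProduct, hX, ← mul_sum, hv, mul_zero, Pi.zero_apply]

variable [Fintype ι]

lemma sum_sum_mul_eq_dotProduct_mulVec (X U : Matrix ι κ ℝ) (v w : κ → ℝ) :
    ∑ j, ∑ j', v j * (∑ i, X i j * U i j') * w j' = (X *ᵥ v) ⬝ᵥ (U *ᵥ w) := by
  rw [← vecMul_transpose, ← dotProduct_mulVec, mulVec_mulVec]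
  refine Finset.sum_congr rfl fun j _ => ?_
  rw [mulVec, dotProduct, mul_sum]
  simp only [mul_apply, transpose_apply, mul_assoc]

lemma dotProduct_mulVec_of_mulVec_eq_const {U : Matrix ι κ ℝ} {w : κ → ℝ} {u : ℝ}
    (h : ∀ i, ∑ j, U i j * w j = u) (a : ι → ℝ) : a ⬝ᵥ (U *ᵥ w) = u * ∑ i, a i := by
  simp only [dotProduct, mulVec, h, mul_sum, mul_comm]

lemma dotProduct_mulVec_of_vecMul_eq_const {U : Matrix ι κ ℝ} {a : ι → ℝ} {u : ℝ}
    (h : ∀ j, ∑ i, U i j * a i = u) (w : κ → ℝ) : a ⬝ᵥ (U *ᵥ w) = u * ∑ j, w j := by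
  rw [dotProduct_mulVec, dotProduct, mul_sum]
  refine Finset.sum_congr rfl fun j _ => ?_
  rw [vecMul, dotProduct, ← h j]
  simp only [mul_comm]

lemma sum_mulVec_of_sum_col_eq_one {X : Matrix ι κ ℝ} (hX : ∀ j, ∑ i, X i j = 1) (w : κ → ℝ) :
    ∑ i, (X *ᵥ w) i = ∑ j, w j := by
  simp only [mulVec, dotProduct]
  rw [Finset.sum_comm]
  simp only [← sum_mul, hX, one_mul]

/- `fitnessX U y i j` and `fitnessY U X y j` are the paper's `g_{ij}` and `h_j`; the inner sum
`∑ j', X i j' * y j'` in `fitnessY` is `x^st_i`. -/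
def fitnessX (U : Matrix ι κ ℝ) (y : κ → ℝ) (i : ι) (j : κ) : ℝ :=
  y j * ∑ j', U i j' * y j'

def fitnessY (U X : Matrix ι κ ℝ) (y : κ → ℝ) (j : κ) : ℝ :=
  (∑ i, U i j * ∑ j', X i j' * y j') + ∑ i, X i j * ∑ j', U i j' * y j'

lemma sum_sum_mul_fitnessX (U : Matrix ι κ ℝ) (y : κ → ℝ) (a : Matrix ι κ ℝ) :
    ∑ j, ∑ i, a i j * fitnessX U y i j = (a *ᵥ y) ⬝ᵥ (U *ᵥ y) := by
  rw [Finset.sum_comm]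
  refine Finset.sum_congr rfl fun i _ => ?_
  simp only [fitnessX, mulVec, dotProduct, sum_mul, mul_assoc]

lemma sum_mul_fitnessY (U X : Matrix ι κ ℝ) (y v : κ → ℝ) :
    ∑ j, v j * fitnessY U X y j = (X *ᵥ y) ⬝ᵥ (U *ᵥ v) + (U *ᵥ y) ⬝ᵥ (X *ᵥ v) := by
  simp only [fitnessY, mul_add, sum_add_distrib]
  congr 1 <;> rw [dotProduct_mulVec, dotProduct_comm] <;>
    simp only [dotProduct, vecMul, mulVec, mul_comm]

lemma replicatorRate_eq_neg_dotProduct {U X : Matrix ι κ ℝ} {xs : ι → ℝ} {ys y : κ → ℝ} {u : ℝ}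
    (hNx : ∀ j, ∑ i, U i j * xs i = u) (hNy : ∀ i, ∑ j, U i j * ys j = u)
    (hX : ∀ j, ∑ i, X i j = 1) (hys : ∑ j, ys j = 1) (hy : ∑ j, y j = 1) :
    (∑ j, ∑ i, (X i j - xs i) * fitnessX U y i j) + ∑ j, (y j - ys j) * -fitnessY U X y j =
      -((X *ᵥ (y - ys)) ⬝ᵥ (U *ᵥ (y - ys))) := by
  have hXpart : ∑ j, ∑ i, (X i j - xs i) * fitnessX U y i j =
      (X *ᵥ y) ⬝ᵥ (U *ᵥ y) - xs ⬝ᵥ (U *ᵥ y) := by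
    have hshift : (X - of fun i _ => xs i) *ᵥ y = X *ᵥ y - xs := by
      rw [sub_mulVec]
      ext i
      simp only [Pi.sub_apply, mulVec, dotProduct, of_apply, ← mul_sum, hy, mul_one]
    rw [← sub_dotProduct, ← hshift, ← sum_sum_mul_fitnessX]
    rfl
  have hYpart := sum_mul_fitnessY U X y (y - ys)
  simp only [Pi.sub_apply] at hYpart
  simp only [mul_neg, sum_neg_distrib, hXpart, hYpart, mulVec_sub, dotProduct_sub, sub_dotProduct,
    dotProduct_mulVec_of_vecMul_eq_const hNx, dotProduct_mulVec_of_mulVec_eq_const hNy,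
    Pi.sub_apply, sum_sub_distrib, sum_mulVec_of_sum_col_eq_one hX, hy, hys, dotProduct_comm (U *ᵥ y)]
  ring

theorem hasDerivAt_conditionalSumDivergence {U : Matrix ι κ ℝ} {xs : ι → ℝ} {ys : κ → ℝ} {u : ℝ}
    (hxs : ∑ i, xs i = 1) (hys : ∑ j, ys j = 1)
    (hNx : ∀ j, ∑ i, U i j * xs i = u) (hNy : ∀ i, ∑ j, U i j * ys j = u)
    {X : ℝ → Matrix ι κ ℝ} {Y : ℝ → κ → ℝ} {t : ℝ}
    (hXt : ∀ i j, X t i j ≠ 0) (hYt : ∀ j, Y t j ≠ 0)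
    (hXsum : ∀ j, ∑ i, X t i j = 1) (hYsum : ∑ j, Y t j = 1)
    (hdX : ∀ i j, HasDerivAt (fun s => X s i j)
      (X t i j * (fitnessX U (Y t) i j - ∑ i', X t i' j * fitnessX U (Y t) i' j)) t)
    (hdY : ∀ j, HasDerivAt (fun s => Y s j)
      (-(Y t j * (fitnessY U (X t) (Y t) j - ∑ j₂, Y t j₂ * fitnessY U (X t) (Y t) j₂))) t) :
    HasDerivAt
      (fun s => (∑ j, ∑ i, xs i * log (xs i / X s i j)) + ∑ j, ys j * log (ys j / Y s j))
      (-((X t *ᵥ (Y t - ys)) ⬝ᵥ (U *ᵥ (Y t - ys)))) t := by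
  have hDX := HasDerivAt.fun_sum (u := univ) fun j _ =>
    hasDerivAt_sum_mul_log_div_of_replicator (p := fun s i => X s i j)
      (g := fun i => fitnessX U (Y t) i j) xs hxs (fun i => hdX i j) (fun i => hXt i j)
  have hDY := hasDerivAt_sum_mul_log_div_of_replicator (p := Y)
      (g := fun j => -fitnessY U (X t) (Y t) j) ys hys
      (fun j => (hdY j).congr_deriv (by simp only [mul_neg, sum_neg_distrib]; ring)) hYt
  rw [← replicatorRate_eq_neg_dotProduct hNx hNy hXsum hys hYsum]
  exact hDX.add hDY

theorem stmt_15_general (mX mY : ℕ) (U : Fin mX → Fin mY → ℝ)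
    -- interior Nash equilibrium (x*, y*) with value u*
    (xs : Fin mX → ℝ) (ys : Fin mY → ℝ) (ustar : ℝ)
    (hxssum : ∑ i : Fin mX, xs i = 1)
    (hyssum : ∑ j : Fin mY, ys j = 1)
    (hNx : ∀ j, ∑ i : Fin mX, U i j * xs i = ustar)
    (hNy : ∀ i, ∑ j : Fin mY, U i j * ys j = ustar)
    -- the reactive strategy X₀ whose columns all equal the mixed strategy x
    (x : Fin mX → ℝ)
    (X₀ : Fin mX → Fin mY → ℝ) (hX₀ : ∀ i j, X₀ i j = x i)
    (y : Fin mY → ℝ) (hy1 : ∑ j : Fin mY, y j = 1) :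
    (∑ j : Fin mY, ∑ j' : Fin mY,
        (y j - ys j) * (∑ i : Fin mX, X₀ i j * U i j') * (y j' - ys j')) = 0 ∧
    (∀ (X : ℝ → Fin mX → Fin mY → ℝ) (Y : ℝ → Fin mY → ℝ) (t₀ : ℝ),
      (∀ t i j, 0 < X t i j) → (∀ t j, 0 < Y t j) →
      (∀ t j, ∑ i : Fin mX, X t i j = 1) → (∀ t, ∑ j : Fin mY, Y t j = 1) →
      -- replicator dynamics of X
      (∀ t i j, HasDerivAt (fun s => X s i j)
        (X t i j * ((Y t j * ∑ j' : Fin mY, U i j' * Y t j') -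
          ∑ i' : Fin mX, X t i' j * (Y t j * ∑ j' : Fin mY, U i' j' * Y t j'))) t) →
      -- replicator dynamics of Y
      (∀ t j, HasDerivAt (fun s => Y s j)
        (-(Y t j * (((∑ i : Fin mX, U i j * (∑ j' : Fin mY, X t i j' * Y t j')) +
            ∑ i : Fin mX, X t i j * ∑ j' : Fin mY, U i j' * Y t j') -
          ∑ j₂ : Fin mY, Y t j₂ *
            ((∑ i : Fin mX, U i j₂ * (∑ j' : Fin mY, X t i j' * Y t j')) +
              ∑ i : Fin mX, X t i j₂ * ∑ j' : Fin mY, U i j' * Y t j')))) t) →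
      X t₀ = X₀ → Y t₀ = y →
      HasDerivAt
        (fun s => (∑ j : Fin mY, ∑ i : Fin mX, xs i * Real.log (xs i / X s i j)) +
          ∑ j : Fin mY, ys j * Real.log (ys j / Y s j)) 0 t₀) := by
  have hQ : (X₀ *ᵥ (y - ys)) ⬝ᵥ (U *ᵥ (y - ys)) = 0 := by
    rw [mulVec_eq_zero_of_columns_eq hX₀ (by simp only [Pi.sub_apply, sum_sub_distrib, hy1, hyssum,
      sub_self]), zero_dotProduct]
  refine ⟨(sum_sum_mul_eq_dotProduct_mulVec X₀ U _ _).trans hQ, ?_⟩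
  intro X Y t₀ hXpos hYpos hXsum hYsum hdX hdY hXt₀ hYt₀
  have hD := hasDerivAt_conditionalSumDivergence hxssum hyssum hNx hNy (t := t₀)
    (fun i j => (hXpos t₀ i j).ne') (fun j => (hYpos t₀ j).ne') (hXsum t₀) (hYsum t₀)
    (fun i j => hdX t₀ i j) (fun j => hdY t₀ j)
  rwa [hXt₀, hYt₀, hQ, neg_zero] at hD

/-- Connection with the classical divergence: If the reactive strategy `X₀`
has all columns equal to a single mixed strategy `x` with positive entries, then for any
`y ∈ Δ^{m_Y−1}`, `(y − y*)ᵀ X₀ᵀ U (y − y*) = 0`; consequently, along the replicator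
dynamics, the instantaneous time derivative of the conditional-sum divergence
`D(X, y) = Σ_j D_KL(x* ‖ x_j) + D_KL(y* ‖ y)` at such a point is `0`. -/
theorem stmt_15 (mX mY : ℕ) (U : Fin mX → Fin mY → ℝ)
    -- interior Nash equilibrium (x*, y*) with value u*
    (xs : Fin mX → ℝ) (ys : Fin mY → ℝ) (ustar : ℝ)
    (hxspos : ∀ i, 0 < xs i) (hxssum : ∑ i : Fin mX, xs i = 1)
    (hyspos : ∀ j, 0 < ys j) (hyssum : ∑ j : Fin mY, ys j = 1)
    (hNx : ∀ j, ∑ i : Fin mX, U i j * xs i = ustar)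
    (hNy : ∀ i, ∑ j : Fin mY, U i j * ys j = ustar)
    -- the reactive strategy X₀ whose columns all equal the mixed strategy x
    (x : Fin mX → ℝ) (hxpos : ∀ i, 0 < x i) (hxsum : ∑ i : Fin mX, x i = 1)
    (X₀ : Fin mX → Fin mY → ℝ) (hX₀ : ∀ i j, X₀ i j = x i)
    (y : Fin mY → ℝ) (hy0 : ∀ j, 0 ≤ y j) (hy1 : ∑ j : Fin mY, y j = 1) :
    (∑ j : Fin mY, ∑ j' : Fin mY,
        (y j - ys j) * (∑ i : Fin mX, X₀ i j * U i j') * (y j' - ys j')) = 0 ∧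
    (∀ (X : ℝ → Fin mX → Fin mY → ℝ) (Y : ℝ → Fin mY → ℝ) (t₀ : ℝ),
      (∀ t i j, 0 < X t i j) → (∀ t j, 0 < Y t j) →
      (∀ t j, ∑ i : Fin mX, X t i j = 1) → (∀ t, ∑ j : Fin mY, Y t j = 1) →
      -- replicator dynamics of X
      (∀ t i j, HasDerivAt (fun s => X s i j)
        (X t i j * ((Y t j * ∑ j' : Fin mY, U i j' * Y t j') -
          ∑ i' : Fin mX, X t i' j * (Y t j * ∑ j' : Fin mY, U i' j' * Y t j'))) t) →
      -- replicator dynamics of Y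
      (∀ t j, HasDerivAt (fun s => Y s j)
        (-(Y t j * (((∑ i : Fin mX, U i j * (∑ j' : Fin mY, X t i j' * Y t j')) +
            ∑ i : Fin mX, X t i j * ∑ j' : Fin mY, U i j' * Y t j') -
          ∑ j₂ : Fin mY, Y t j₂ *
            ((∑ i : Fin mX, U i j₂ * (∑ j' : Fin mY, X t i j' * Y t j')) +
              ∑ i : Fin mX, X t i j₂ * ∑ j' : Fin mY, U i j' * Y t j')))) t) →
      X t₀ = X₀ → Y t₀ = y →
      HasDerivAt
        (fun s => (∑ j : Fin mY, ∑ i : Fin mX, xs i * Real.log (xs i / X s i j)) +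
          ∑ j : Fin mY, ys j * Real.log (ys j / Y s j)) 0 t₀) :=
  stmt_15_general mX mY U xs ys ustar hxssum hyssum hNx hNy x X₀ hX₀ y hy1
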